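/- Let α > 0, θ > 2, and p ≥ max(1, 2·((1+2α)^{−1} + 2α)^{−1}). Every coefficient array β satisfying the Besov condition B^α_{p,∞} satisfies both the condition B^{α/(1+2α)}_{2,∞} and the condition A^α_θ. -/

import Mathlib

open scoped BigOperators

/-- A coefficient array `β` is square-summable if `Σ_{j,k} β_{j,k}² < ∞`. -/
def SqSummable (β : ℕ → ℕ → ℝ) : Prop :=
  Summable fun j : ℕ => ∑ k ∈ Finset.range (2 ^ j), (β j k) ^ 2

/-- The Besov condition `B^α_{p,∞}`. -/
def CondBesov (β : ℕ → ℕ → ℝ) (α p : ℝ) : Prop :=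
  ∃ C : ℝ, ∀ j : ℕ,
    (2 : ℝ) ^ ((j : ℝ) * p * (α + 1 / 2 - 1 / p)) *
      ∑ k ∈ Finset.range (2 ^ j), |β j k| ^ p ≤ C

/-- The condition `B^{α/(1+2α)}_{2,∞}`. -/
def CondB2 (β : ℕ → ℕ → ℝ) (α : ℝ) : Prop :=
  ∃ C : ℝ, ∀ J : ℕ,
    (2 : ℝ) ^ (2 * (J : ℝ) * α / (1 + 2 * α)) *
      ∑' j : ℕ, (if J ≤ j then ∑ k ∈ Finset.range (2 ^ j), (β j k) ^ 2 else 0) ≤ C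

/-- `N(J,j) = min(⌊2^J (j−J+1)^{−θ}⌋, 2^j)`. -/
noncomputable def NJj (θ : ℝ) (J j : ℕ) : ℕ :=
  min ⌊(2 : ℝ) ^ J * ((j : ℝ) - (J : ℝ) + 1) ^ (-θ)⌋₊ (2 ^ j)

/-- `t_{j,J}(β)`: the minimum over subsets `A` of `{0,…,2^j−1}` of cardinality `N(J,j)`
of `Σ_{k ∉ A} β_{j,k}²`, i.e. the sum of squares of all but the `N(J,j)` largest
`|β_{j,k}|` at level `j`. -/
noncomputable def tTail (β : ℕ → ℕ → ℝ) (θ : ℝ) (J j : ℕ) : ℝ :=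
  sInf {x : ℝ | ∃ A : Finset ℕ, A ⊆ Finset.range (2 ^ j) ∧ A.card = NJj θ J j ∧
    x = ∑ k ∈ Finset.range (2 ^ j) \ A, (β j k) ^ 2}

/-- The condition `A^α_θ`. -/
def CondA (β : ℕ → ℕ → ℝ) (α θ : ℝ) : Prop :=
  ∃ C : ℝ, ∀ J : ℕ,
    (2 : ℝ) ^ (2 * (J : ℝ) * α) *
      ∑' j : ℕ, (if J ≤ j then tTail β θ J j else 0) ≤ C

/-! Write `S_j = Σ_k |β_{j,k}|^p ≤ M 2^{-jpδ}` with `δ = α + 1/2 - 1/p`. Then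
`Σ_k β_{j,k}² ≤ M^{2/p} 2^{-2j min(α, δ)}` (from `ℓ^p ⊆ ℓ²` if `p ≤ 2`, from Hölder on `2^j` terms
if `p ≥ 2`), and the condition on `p` says exactly `δ ≥ α/(1+2α)`; summing geometric tails gives
`B^{α/(1+2α)}_{2,∞}`, and also `A^α_θ` when `p ≥ 2`, since `t_{j,J}` is at most the level sum.
For `p ≤ 2` the entries left after removing the `N(J,j)` largest ones satisfy
`|β_{j,k}|^p ≤ S_j / x` with `x = 2^J (j-J+1)^{-θ}`, so `t_{j,J} ≤ (S_j/x)^{2/p-1} S_j`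
`≤ M^{2/p} 2^{-2αJ} (j-J+1)^{θ(2/p-1)} 2^{-2δ(j-J)}`, a polynomial times a geometric sequence. -/

open Finset

namespace Finset

variable {ι : Type*} {s : Finset ι} {f : ι → ℝ}

theorem sum_rpow_le_rpow_sub_one_mul_sum {b q : ℝ} (hq : 1 ≤ q)
    (hf : ∀ i ∈ s, 0 ≤ f i ∧ f i ≤ b) :
    ∑ i ∈ s, f i ^ q ≤ b ^ (q - 1) * ∑ i ∈ s, f i := by
  rw [mul_sum]
  refine sum_le_sum fun i hi => ?_
  obtain ⟨hf0, hfb⟩ := hf i hi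
  calc f i ^ q = f i ^ (q - 1) * f i := by
        rw [← Real.rpow_add_one' hf0 (by linarith), sub_add_cancel]
    _ ≤ b ^ (q - 1) * f i := by gcongr

theorem sum_rpow_le_card_rpow_mul_rpow_sum {q : ℝ} (hq0 : 0 < q) (hq1 : q ≤ 1)
    (hf : ∀ i ∈ s, 0 ≤ f i) :
    ∑ i ∈ s, f i ^ q ≤ (#s : ℝ) ^ (1 - q) * (∑ i ∈ s, f i) ^ q := by
  have hg : ∀ i ∈ s, 0 ≤ f i ^ q := fun i hi => Real.rpow_nonneg (hf i hi) q
  have hHolder := Real.rpow_sum_le_const_mul_sum_rpow_of_nonneg s (one_le_one_div hq0 hq1) hg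
  have hcancel : ∀ i ∈ s, (f i ^ q) ^ (1 / q) = f i := fun i hi => by
    rw [← Real.rpow_mul (hf i hi), mul_one_div_cancel hq0.ne', Real.rpow_one]
  rw [sum_congr rfl hcancel] at hHolder
  have hsum0 : 0 ≤ ∑ i ∈ s, f i ^ q := sum_nonneg hg
  calc ∑ i ∈ s, f i ^ q = ((∑ i ∈ s, f i ^ q) ^ (1 / q)) ^ q := by
        rw [← Real.rpow_mul hsum0, one_div_mul_cancel hq0.ne', Real.rpow_one]
    _ ≤ ((#s : ℝ) ^ (1 / q - 1) * ∑ i ∈ s, f i) ^ q := by gcongr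
    _ = (#s : ℝ) ^ (1 - q) * (∑ i ∈ s, f i) ^ q := by
        rw [Real.mul_rpow (by positivity) (sum_nonneg hf), ← Real.rpow_mul (by positivity)]
        congr 2
        field_simp

theorem exists_subset_card_eq_forall_mul_le_sum [DecidableEq ι] (hf : ∀ i ∈ s, 0 ≤ f i) {N : ℕ}
    (hN : N ≤ #s) :
    ∃ A ⊆ s, #A = N ∧ ∀ k ∈ s \ A, (N + 1) * f k ≤ ∑ i ∈ s, f i := by
  obtain ⟨A, hAmem, hAmax⟩ := exists_max_image (s.powersetCard N) (fun B => ∑ i ∈ B, f i)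
    (powersetCard_nonempty.2 hN)
  obtain ⟨hAs, hAcard⟩ := mem_powersetCard.1 hAmem
  refine ⟨A, hAs, hAcard, fun k hk => ?_⟩
  obtain ⟨hks, hkA⟩ := mem_sdiff.1 hk
  have hle_of_mem : ∀ l ∈ A, f k ≤ f l := by
    intro l hl
    by_contra! hlt
    have hswap : insert k (A.erase l) ∈ s.powersetCard N := by
      refine mem_powersetCard.2 ⟨insert_subset hks ((erase_subset l A).trans hAs), ?_⟩
      rw [card_insert_of_notMem (fun h => hkA (mem_of_mem_erase h)), card_erase_of_mem hl,
        hAcard, Nat.sub_add_cancel (hAcard ▸ card_pos.2 ⟨l, hl⟩)]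
    have := hAmax _ hswap
    rw [sum_insert (fun h => hkA (mem_of_mem_erase h)), sum_erase_eq_sub hl] at this
    linarith
  calc (N + 1) * f k = f k + #A • f k := by rw [hAcard, nsmul_eq_mul]; ring
    _ ≤ f k + ∑ i ∈ A, f i := by gcongr; exact card_nsmul_le_sum A f (f k) hle_of_mem
    _ = ∑ i ∈ insert k A, f i := (sum_insert hkA).symm
    _ ≤ ∑ i ∈ s, f i :=
        sum_le_sum_of_subset_of_nonneg (insert_subset hks hAs) fun i hi _ => hf i hi

end Finset

theorem summable_add_one_rpow_mul_pow (q : ℝ) {r : ℝ} (hr0 : 0 < r) (hr1 : r < 1) :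
    Summable fun i : ℕ => ((i : ℝ) + 1) ^ q * r ^ i := by
  have hnat : Summable fun i : ℕ => ((i : ℝ) + 1) ^ ⌈q⌉₊ * r ^ i := by
    have hr : ‖r‖ < 1 := by rwa [Real.norm_eq_abs, abs_of_pos hr0]
    have h := (summable_nat_add_iff (f := fun n : ℕ => (n : ℝ) ^ ⌈q⌉₊ * r ^ n) 1).2
      (summable_pow_mul_geometric_of_norm_lt_one ⌈q⌉₊ hr)
    refine (summable_mul_left_iff hr0.ne').1 (h.congr fun i => ?_)
    push_cast
    ring
  refine hnat.of_nonneg_of_le (fun i => by positivity) fun i => ?_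
  gcongr
  rw [← Real.rpow_natCast]
  exact Real.rpow_le_rpow_of_exponent_le (by linarith [i.cast_nonneg (α := ℝ)]) (Nat.le_ceil q)

theorem tsum_ite_le_eq_tsum_add (g : ℕ → ℝ) (J : ℕ) :
    ∑' j : ℕ, (if J ≤ j then g j else 0) = ∑' i : ℕ, g (J + i) := by
  have hsupp : Function.support (fun j : ℕ => if J ≤ j then g j else 0) ⊆
      Set.range (J + ·) := fun j hj => by
    by_cases h : J ≤ j
    · exact ⟨j - J, Nat.add_sub_cancel' h⟩
    · simp [h] at hj
  rw [← (add_right_injective J).tsum_eq hsupp]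
  simp

theorem exists_forall_mul_tsum_ite_le {w : ℕ → ℝ} {F : ℕ → ℕ → ℝ} {c q r : ℝ}
    (hr0 : 0 < r) (hr1 : r < 1) (hw : ∀ J, 0 ≤ w J) (hF0 : ∀ J j, 0 ≤ F J j)
    (hF : ∀ J i, w J * F J (J + i) ≤ c * (((i : ℝ) + 1) ^ q * r ^ i)) :
    ∃ C, ∀ J, w J * ∑' j : ℕ, (if J ≤ j then F J j else 0) ≤ C := by
  have hsum := (summable_add_one_rpow_mul_pow q hr0 hr1).mul_left c
  refine ⟨c * ∑' i : ℕ, ((i : ℝ) + 1) ^ q * r ^ i, fun J => ?_⟩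
  rw [tsum_ite_le_eq_tsum_add, ← tsum_mul_left, ← tsum_mul_left]
  have hwF : Summable fun i => w J * F J (J + i) :=
    hsum.of_nonneg_of_le (fun i => mul_nonneg (hw J) (hF0 J _)) (hF J)
  exact hwF.tsum_le_tsum (hF J) hsum

theorem exists_forall_two_rpow_mul_tsum_ite_le {F : ℕ → ℕ → ℝ} {a c : ℝ} (ha : 0 < a)
    (hF0 : ∀ J j, 0 ≤ F J j) (hF : ∀ J j : ℕ, F J j ≤ c * 2 ^ (-(a * j))) :
    ∃ C, ∀ J : ℕ, (2 : ℝ) ^ (a * J) * ∑' j : ℕ, (if J ≤ j then F J j else 0) ≤ C := by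
  refine exists_forall_mul_tsum_ite_le (q := 0) (c := c) (Real.rpow_pos_of_pos two_pos (-a))
    (Real.rpow_lt_one_of_one_lt_of_neg one_lt_two (by linarith)) (fun J => by positivity) hF0
    fun J i => ?_
  calc (2 : ℝ) ^ (a * J) * F J (J + i) ≤ 2 ^ (a * J) * (c * 2 ^ (-(a * ↑(J + i)))) := by
        gcongr; exact hF _ _
    _ = c * (((i : ℝ) + 1) ^ (0 : ℝ) * (2 ^ (-a)) ^ i) := by
        rw [Real.rpow_zero, one_mul, ← Real.rpow_mul_natCast zero_le_two, mul_left_comm,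
          ← Real.rpow_add two_pos]
        push_cast
        ring_nf

theorem sq_eq_abs_rpow_rpow (x : ℝ) {p : ℝ} (hp : 0 < p) : x ^ 2 = (|x| ^ p) ^ (2 / p) := by
  rw [← Real.rpow_mul (abs_nonneg x), mul_div_cancel₀ _ hp.ne', Real.rpow_two, sq_abs]

theorem CondBesov.exists_sum_le {β : ℕ → ℕ → ℝ} {α p : ℝ} (h : CondBesov β α p) :
    ∃ M, 0 ≤ M ∧ ∀ j : ℕ,
      ∑ k ∈ range (2 ^ j), |β j k| ^ p ≤ M * 2 ^ (-(j * p * (α + 1 / 2 - 1 / p))) := by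
  obtain ⟨M, hM⟩ := h
  have hS0 : ∀ j, 0 ≤ ∑ k ∈ range (2 ^ j), |β j k| ^ p := fun j => by positivity
  refine ⟨M, ?_, fun j => ?_⟩
  · exact (mul_nonneg (by positivity) (hS0 0)).trans (hM 0)
  · rw [Real.rpow_neg zero_le_two, le_mul_inv_iff₀ (by positivity), mul_comm]
    exact hM j

theorem div_rpow_mul_le {p δ M S y : ℝ} (j : ℕ) (hp0 : 0 < p) (hp2 : p ≤ 2) (hS0 : 0 ≤ S)
    (hS : S ≤ M * 2 ^ (-(j * p * δ))) (hy : 0 < y) :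
    (S / y) ^ (2 / p - 1) * S ≤ M ^ (2 / p) * 2 ^ (-(2 * δ * j)) * y ^ (-(2 / p - 1)) := by
  have he : 0 ≤ 2 / p - 1 := by rw [sub_nonneg, le_div_iff₀ hp0]; linarith
  have hM : 0 ≤ M := nonneg_of_mul_nonneg_left (hS0.trans hS) (by positivity)
  calc (S / y) ^ (2 / p - 1) * S
      ≤ (M * 2 ^ (-(j * p * δ)) / y) ^ (2 / p - 1) * (M * 2 ^ (-(j * p * δ))) := by gcongr
    _ = (M * 2 ^ (-(j * p * δ))) ^ (2 / p - 1 + 1) * y ^ (-(2 / p - 1)) := by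
        rw [Real.div_rpow (by positivity) hy.le, Real.rpow_neg hy.le,
          Real.rpow_add_one' (by positivity) (by simp [hp0.ne'])]
        ring
    _ = M ^ (2 / p) * 2 ^ (-(2 * δ * j)) * y ^ (-(2 / p - 1)) := by
        rw [sub_add_cancel, Real.mul_rpow hM (by positivity), ← Real.rpow_mul zero_le_two]
        congr 3
        field_simp

section Levels

variable (β : ℕ → ℕ → ℝ) {p δ M : ℝ} (j : ℕ)

theorem sum_sq_le_of_le_two (hp1 : 1 ≤ p) (hp2 : p ≤ 2)
    (hS : ∑ k ∈ range (2 ^ j), |β j k| ^ p ≤ M * 2 ^ (-(j * p * δ))) :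
    ∑ k ∈ range (2 ^ j), β j k ^ 2 ≤ M ^ (2 / p) * 2 ^ (-(2 * δ * j)) := by
  have hp0 : 0 < p := by linarith
  set S := ∑ k ∈ range (2 ^ j), |β j k| ^ p
  have hS0 : 0 ≤ S := by positivity
  have hT : ∑ k ∈ range (2 ^ j), β j k ^ 2 ≤ S ^ (2 / p - 1) * S := by
    simp_rw [sq_eq_abs_rpow_rpow _ hp0]
    refine sum_rpow_le_rpow_sub_one_mul_sum (by rw [le_div_iff₀ hp0]; linarith) fun k hk =>
      ⟨by positivity, single_le_sum (f := fun k => |β j k| ^ p) (fun _ _ => by positivity) hk⟩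
  have h := div_rpow_mul_le j hp0 hp2 hS0 hS one_pos
  rw [div_one, Real.one_rpow, mul_one] at h
  exact hT.trans h

theorem sum_sq_le_of_two_le {α : ℝ} (hp2 : 2 ≤ p) (hM : 0 ≤ M)
    (hS : ∑ k ∈ range (2 ^ j), |β j k| ^ p ≤ M * 2 ^ (-(j * p * δ)))
    (hδ : δ = α + 1 / 2 - 1 / p) :
    ∑ k ∈ range (2 ^ j), β j k ^ 2 ≤ M ^ (2 / p) * 2 ^ (-(2 * α * j)) := by
  have hp0 : 0 < p := by linarith
  calc ∑ k ∈ range (2 ^ j), β j k ^ 2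
      = ∑ k ∈ range (2 ^ j), (|β j k| ^ p) ^ (2 / p) := by simp_rw [sq_eq_abs_rpow_rpow _ hp0]
    _ ≤ (#(range (2 ^ j)) : ℝ) ^ (1 - 2 / p) * (∑ k ∈ range (2 ^ j), |β j k| ^ p) ^ (2 / p) :=
        sum_rpow_le_card_rpow_mul_rpow_sum (by positivity) (by rw [div_le_one hp0]; exact hp2)
          fun k _ => by positivity
    _ ≤ (2 ^ (j : ℝ)) ^ (1 - 2 / p) * (M * 2 ^ (-(j * p * δ))) ^ (2 / p) := by
        rw [card_range, Nat.cast_pow, Nat.cast_ofNat, Real.rpow_natCast]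
        gcongr
    _ = M ^ (2 / p) * 2 ^ (-(2 * α * j)) := by
        rw [Real.mul_rpow hM (by positivity), ← Real.rpow_mul zero_le_two,
          ← Real.rpow_mul zero_le_two, mul_left_comm, ← Real.rpow_add two_pos, hδ]
        congr 2
        field_simp
        ring

end Levels

section Tail

variable (β : ℕ → ℕ → ℝ) (θ : ℝ) (J j : ℕ)

theorem tTail_nonneg : 0 ≤ tTail β θ J j :=
  Real.sInf_nonneg <| by
    rintro x ⟨A, -, -, rfl⟩
    positivity

theorem tTail_le {A : Finset ℕ} (hA : A ⊆ range (2 ^ j)) (hcard : #A = NJj θ J j) :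
    tTail β θ J j ≤ ∑ k ∈ range (2 ^ j) \ A, β j k ^ 2 := by
  refine csInf_le ⟨0, ?_⟩ ⟨A, hA, hcard, rfl⟩
  rintro x ⟨A, -, -, rfl⟩
  positivity

theorem tTail_le_sum_sq : tTail β θ J j ≤ ∑ k ∈ range (2 ^ j), β j k ^ 2 := by
  obtain ⟨A, hA, hcard⟩ := exists_subset_card_eq
    (show NJj θ J j ≤ #(range (2 ^ j)) from card_range _ ▸ min_le_right _ _)
  exact (tTail_le β θ J j hA hcard).trans
    (sum_le_sum_of_subset_of_nonneg sdiff_subset fun _ _ _ => sq_nonneg _)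

theorem tTail_le_div_rpow_mul {p : ℝ} (hJj : J ≤ j) (hp1 : 1 ≤ p) (hp2 : p ≤ 2) :
    tTail β θ J j ≤ ((∑ k ∈ range (2 ^ j), |β j k| ^ p) /
        (2 ^ J * ((j : ℝ) - J + 1) ^ (-θ))) ^ (2 / p - 1) *
      ∑ k ∈ range (2 ^ j), |β j k| ^ p := by
  have hp0 : 0 < p := by linarith
  set S := ∑ k ∈ range (2 ^ j), |β j k| ^ p
  set x : ℝ := 2 ^ J * ((j : ℝ) - J + 1) ^ (-θ)
  have hx : 0 < x := mul_pos (by positivity)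
    (Real.rpow_pos_of_pos (by linarith [(Nat.cast_le (α := ℝ)).2 hJj]) _)
  obtain ⟨A, hA, hcard, htop⟩ := exists_subset_card_eq_forall_mul_le_sum
    (f := fun k => |β j k| ^ p) (fun _ _ => by positivity)
    (show NJj θ J j ≤ #(range (2 ^ j)) from card_range _ ▸ min_le_right _ _)
  -- An entry left out of `A` forces `N(J,j) < 2^j`, so `N(J,j) = ⌊x⌋₊ > x - 1`.
  have hsmall : ∀ k ∈ range (2 ^ j) \ A, 0 ≤ |β j k| ^ p ∧ |β j k| ^ p ≤ S / x := by
    intro k hk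
    have hN : NJj θ J j = ⌊x⌋₊ := by
      have hlt : #A < #(range (2 ^ j)) := card_lt_card (ssubset_of_subset_of_ne hA
        fun h => (mem_sdiff.1 hk).2 (h ▸ (mem_sdiff.1 hk).1))
      rw [card_range, hcard] at hlt
      exact min_eq_left (min_lt_iff.1 hlt |>.resolve_right (lt_irrefl _)).le
    refine ⟨by positivity, (le_div_iff₀ hx).2 ?_⟩
    calc |β j k| ^ p * x ≤ (NJj θ J j + 1) * |β j k| ^ p := by
          rw [mul_comm, hN]
          gcongr
          exact (Nat.lt_floor_add_one x).le
      _ ≤ S := htop k hk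
  calc tTail β θ J j ≤ ∑ k ∈ range (2 ^ j) \ A, (|β j k| ^ p) ^ (2 / p) := by
        simp_rw [← sq_eq_abs_rpow_rpow _ hp0]
        exact tTail_le β θ J j hA hcard
    _ ≤ (S / x) ^ (2 / p - 1) * ∑ k ∈ range (2 ^ j) \ A, |β j k| ^ p :=
        sum_rpow_le_rpow_sub_one_mul_sum (by rw [le_div_iff₀ hp0]; linarith) hsmall
    _ ≤ (S / x) ^ (2 / p - 1) * S := by
        gcongr
        exact sum_le_sum_of_subset_of_nonneg sdiff_subset fun _ _ _ => by positivity

end Tail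

theorem two_rpow_mul_tTail_add_le (β : ℕ → ℕ → ℝ) (θ : ℝ) {α p δ M : ℝ} (hp1 : 1 ≤ p)
    (hp2 : p ≤ 2) (hS : ∀ j : ℕ, ∑ k ∈ range (2 ^ j), |β j k| ^ p ≤ M * 2 ^ (-(j * p * δ)))
    (hδ : δ = α + 1 / 2 - 1 / p) (J i : ℕ) :
    (2 : ℝ) ^ (2 * (J : ℝ) * α) * tTail β θ J (J + i) ≤
      M ^ (2 / p) * (((i : ℝ) + 1) ^ (θ * (2 / p - 1)) * (2 ^ (-(2 * δ))) ^ i) := by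
  have hu : ((J + i : ℕ) : ℝ) - J + 1 = i + 1 := by push_cast; ring
  have htail := tTail_le_div_rpow_mul β θ J (J + i) (Nat.le_add_right J i) hp1 hp2
  rw [hu] at htail
  have hbound := htail.trans (div_rpow_mul_le (J + i) (by linarith) hp2 (by positivity) (hS _)
    (by positivity))
  have hexp : (2 : ℝ) ^ (2 * (J : ℝ) * α) * 2 ^ (-(2 * δ * ↑(J + i))) * 2 ^ (J * -(2 / p - 1))
      = (2 ^ (-(2 * δ))) ^ i := by
    rw [← Real.rpow_add two_pos, ← Real.rpow_add two_pos, ← Real.rpow_mul_natCast zero_le_two,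
      hδ]
    congr 1
    push_cast
    field_simp
    ring
  calc (2 : ℝ) ^ (2 * (J : ℝ) * α) * tTail β θ J (J + i)
      ≤ 2 ^ (2 * (J : ℝ) * α) * (M ^ (2 / p) * 2 ^ (-(2 * δ * ↑(J + i))) *
          (2 ^ J * ((i : ℝ) + 1) ^ (-θ)) ^ (-(2 / p - 1))) :=
        mul_le_mul_of_nonneg_left hbound (by positivity)
    _ = M ^ (2 / p) * (((i : ℝ) + 1) ^ (θ * (2 / p - 1)) * (2 ^ (-(2 * δ))) ^ i) := by
        rw [Real.mul_rpow (by positivity) (by positivity), ← Real.rpow_natCast,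
          ← Real.rpow_mul zero_le_two, ← Real.rpow_mul (by positivity), ← hexp]
        ring_nf

theorem div_one_add_two_mul_le_of_max_le {α p : ℝ} (hα : 0 < α)
    (hp : max 1 (2 * ((1 + 2 * α)⁻¹ + 2 * α)⁻¹) ≤ p) :
    α / (1 + 2 * α) ≤ α + 1 / 2 - 1 / p := by
  have hp0 : 0 < p := lt_of_lt_of_le one_pos ((le_max_left _ _).trans hp)
  have hinv : 1 / p ≤ ((1 + 2 * α)⁻¹ + 2 * α) / 2 := by
    rw [one_div, inv_le_comm₀ hp0 (by positivity), inv_div]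
    simpa [div_eq_mul_inv] using (le_max_right _ _).trans hp
  have hid : α / (1 + 2 * α) = α + 1 / 2 - ((1 + 2 * α)⁻¹ + 2 * α) / 2 := by
    field_simp
    ring
  linarith

theorem sum_sq_le_of_besov (β : ℕ → ℕ → ℝ) {α p δ M : ℝ} (j : ℕ) (hα : 0 < α) (hp1 : 1 ≤ p)
    (hδ : δ = α + 1 / 2 - 1 / p) (hs : α / (1 + 2 * α) ≤ δ) (hM : 0 ≤ M)
    (hS : ∑ k ∈ range (2 ^ j), |β j k| ^ p ≤ M * 2 ^ (-(j * p * δ))) :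
    ∑ k ∈ range (2 ^ j), β j k ^ 2 ≤ M ^ (2 / p) * 2 ^ (-(2 * (α / (1 + 2 * α)) * j)) := by
  rcases le_total p 2 with hp2 | hp2
  · refine (sum_sq_le_of_le_two β j hp1 hp2 hS).trans ?_
    gcongr
    exact one_le_two
  · refine (sum_sq_le_of_two_le β j hp2 hM hS hδ).trans ?_
    gcongr
    · exact one_le_two
    · exact div_le_self hα.le (by linarith)

section Embedding

variable {β : ℕ → ℕ → ℝ} {α p : ℝ}

theorem condB2_of_condBesov (hα : 0 < α) (hp1 : 1 ≤ p)
    (hs : α / (1 + 2 * α) ≤ α + 1 / 2 - 1 / p) (hβ : CondBesov β α p) : CondB2 β α := by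
  obtain ⟨M, hM, hS⟩ := hβ.exists_sum_le
  obtain ⟨C, hC⟩ := exists_forall_two_rpow_mul_tsum_ite_le
    (F := fun _ j => ∑ k ∈ range (2 ^ j), β j k ^ 2) (by positivity : 0 < 2 * (α / (1 + 2 * α)))
    (fun _ _ => by positivity)
    fun _ j => sum_sq_le_of_besov β j hα hp1 rfl hs hM (hS j)
  exact ⟨C, fun J => by convert hC J using 3; ring⟩

theorem condA_of_condBesov (θ : ℝ) (hα : 0 < α) (hp1 : 1 ≤ p)
    (hs : α / (1 + 2 * α) ≤ α + 1 / 2 - 1 / p) (hβ : CondBesov β α p) : CondA β α θ := by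
  obtain ⟨M, hM, hS⟩ := hβ.exists_sum_le
  rcases le_total p 2 with hp2 | hp2
  · have hδ : 0 < α + 1 / 2 - 1 / p := (by positivity : 0 < α / (1 + 2 * α)).trans_le hs
    exact exists_forall_mul_tsum_ite_le (Real.rpow_pos_of_pos two_pos _)
      (Real.rpow_lt_one_of_one_lt_of_neg one_lt_two (by linarith)) (fun _ => by positivity)
      (tTail_nonneg β θ) (two_rpow_mul_tTail_add_le β θ hp1 hp2 hS rfl)
  · obtain ⟨C, hC⟩ := exists_forall_two_rpow_mul_tsum_ite_le (F := tTail β θ)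
      (by positivity : 0 < 2 * α) (tTail_nonneg β θ) fun J j =>
        (tTail_le_sum_sq β θ J j).trans (sum_sq_le_of_two_le β j hp2 hM (hS j) rfl)
    exact ⟨C, fun J => by convert hC J using 3; ring⟩

end Embedding

theorem stmt_12_general (α θ p : ℝ) (hα : 0 < α)
    (hp : max 1 (2 * ((1 + 2 * α)⁻¹ + 2 * α)⁻¹) ≤ p)
    (β : ℕ → ℕ → ℝ) (hbesov : CondBesov β α p) :
    CondB2 β α ∧ CondA β α θ := by
  have hp1 : 1 ≤ p := (le_max_left _ _).trans hp
  have hs := div_one_add_two_mul_le_of_max_le hα hp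
  exact ⟨condB2_of_condBesov hα hp1 hs hbesov, condA_of_condBesov θ hα hp1 hs hbesov⟩

/-- the inclusion `B^α_{p,∞} ⊆ B^{α/(1+2α)}_{2,∞} ∩ A^α_θ` for
`p ≥ max(1, 2((1+2α)⁻¹ + 2α)⁻¹)`. -/
theorem stmt_12 (α θ p : ℝ) (hα : 0 < α) (hθ : 2 < θ)
    (hp : max 1 (2 * ((1 + 2 * α)⁻¹ + 2 * α)⁻¹) ≤ p)
    (β : ℕ → ℕ → ℝ) (hβ : SqSummable β) (hbesov : CondBesov β α p) :
    CondB2 β α ∧ CondA β α θ :=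
  stmt_12_general α θ p hα hp β hbesov
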